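/- Let (G_1,…,G_{n−1}) be a multiplicity-free chain of S_n labelled by b ∈ 𝔹_{n−2} with associated conjugating permutation u (so u·S_{[1,n−m+1]}·u^{−1} = G_m for all m), and let w_0 ∈ S_n be the longest element. Then (w_0·G_1·w_0, …, w_0·G_{n−1}·w_0) is again a multiplicity-free chain of S_n, it is labelled by the complementary sequence ol(b), and its associated conjugating permutation is w_0·u. -/

import Mathlib

/-!
Common combinatorial background: standard Young tableaux encoded as chains of
Young diagrams, the box-removal map `d`, box-addition `up`, the row statistic
`ε_k`, binary sequences (as functions `ℕ → Bool`), the generalised bijections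
`phi` and partial orders `leB` of Definition 4.1, and interval parabolic
subgroups of symmetric groups.
-/

open scoped BigOperators

/-- A standard Young tableau with `n` boxes, encoded as the chain of Young
diagrams `∅ = chain 0 ⊂ chain 1 ⊂ ⋯ ⊂ chain n`, where `chain k` is the shape
occupied by the entries `1, …, k`. -/
structure SYT (n : ℕ) where
  chain : ℕ → YoungDiagram
  chain_zero : chain 0 = ⊥
  chain_mono : ∀ k, chain k ≤ chain (k + 1)
  chain_card : ∀ k, k ≤ n → (chain k).card = k
  chain_stable : ∀ k, n ≤ k → chain k = chain n

namespace SYT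

/-- The shape of a standard Young tableau. -/
def shape {n : ℕ} (T : SYT n) : YoungDiagram := T.chain n

lemma chain_monotone {n : ℕ} (T : SYT n) : Monotone T.chain :=
  monotone_nat_of_le_succ T.chain_mono

/-- `ε_k(T)`: the (0-indexed) row of `T` containing the entry `k`. -/
noncomputable def row {n : ℕ} (T : SYT n) (k : ℕ) : ℕ :=
  sInf {i | ∃ j, (i, j) ∈ T.chain k ∧ (i, j) ∉ T.chain (k - 1)}

/-- `d(T)`: the tableau obtained from `T` by removing the box containing the
largest entry. -/
def d {n : ℕ} (T : SYT (n + 1)) : SYT n where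
  chain k := T.chain (min k n)
  chain_zero := by simpa using T.chain_zero
  chain_mono k := T.chain_monotone (by omega)
  chain_card k hk := by
    show (T.chain (min k n)).card = k
    rw [min_eq_left hk]; exact T.chain_card k (by omega)
  chain_stable k hk := by
    show T.chain (min k n) = T.chain (min n n)
    rw [min_eq_right hk, min_self]

/-- The one-row Young diagram with `m` cells. -/
def rowDiagram (m : ℕ) : YoungDiagram where
  cells := (Finset.range m).map ⟨fun j => (0, j), fun a b h => by simpa using h⟩
  isLowerSet := by
    rintro ⟨x1, x2⟩ ⟨y1, y2⟩ ⟨h1, h2⟩ hx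
    simp only [Finset.coe_map, Function.Embedding.coeFn_mk, Set.mem_image,
      Finset.mem_coe, Finset.mem_range, Prod.mk.injEq] at hx ⊢
    obtain ⟨j, hj, hjx⟩ := hx
    change (0, j) = (x1, x2) at hjx
    simp only [Prod.mk.injEq] at hjx h1 h2
    obtain ⟨rfl, rfl⟩ := hjx
    exact ⟨y2, by omega, show (0, y2) = (y1, y2) by rw [show y1 = 0 by omega]⟩

lemma rowDiagram_card (m : ℕ) : (rowDiagram m).card = m := by
  simp [rowDiagram, YoungDiagram.card]

lemma rowDiagram_mono {a b : ℕ} (h : a ≤ b) : rowDiagram a ≤ rowDiagram b := by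
  intro x hx
  simp only [rowDiagram, YoungDiagram.mem_mk, Finset.mem_coe, Finset.mem_map,
    Function.Embedding.coeFn_mk, Finset.mem_range, SetLike.mem_coe] at hx ⊢
  rw [← YoungDiagram.mem_cells, Finset.mem_map] at hx ⊢
  simp only [Finset.mem_range] at hx ⊢
  obtain ⟨j, hj, rfl⟩ := hx
  exact ⟨j, by omega, rfl⟩

lemma rowDiagram_zero : rowDiagram 0 = ⊥ := by
  ext x
  simp [rowDiagram, YoungDiagram.mem_mk]

/-- The one-row standard Young tableau with `n` boxes. -/
def rowSYT (n : ℕ) : SYT n where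
  chain k := rowDiagram (min k n)
  chain_zero := by simpa using rowDiagram_zero
  chain_mono k := rowDiagram_mono (by omega)
  chain_card k hk := by
    show (rowDiagram (min k n)).card = k
    rw [min_eq_left hk]; exact rowDiagram_card k
  chain_stable k hk := by
    show rowDiagram (min k n) = rowDiagram (min n n)
    rw [min_eq_right hk, min_self]

open Classical in
/-- `S⁺`: add a box containing the entry `n + 1` to `S` so that the resulting
tableau has shape `μ` (junk value if this is impossible). -/
noncomputable def up {n : ℕ} (S : SYT n) (μ : YoungDiagram) : SYT (n + 1) :=
  if h : S.shape ≤ μ ∧ μ.card = n + 1 then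
    { chain := fun k => if k ≤ n then S.chain k else μ
      chain_zero := by simpa using S.chain_zero
      chain_mono := by
        intro k
        show (if k ≤ n then S.chain k else μ) ≤ (if k + 1 ≤ n then S.chain (k + 1) else μ)
        rcases le_or_gt (k + 1) n with h2 | h2
        · rw [if_pos (by omega : k ≤ n), if_pos h2]
          exact S.chain_mono k
        · rw [if_neg (by omega : ¬ k + 1 ≤ n)]
          by_cases h1 : k ≤ n
          · rw [if_pos h1]
            have hkn : k = n := by omega
            subst hkn
            exact h.1
          · rw [if_neg h1]
      chain_card := by
        intro k hk
        show (if k ≤ n then S.chain k else μ).card = k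
        by_cases h1 : k ≤ n
        · rw [if_pos h1]; exact S.chain_card k h1
        · rw [if_neg h1]
          have : k = n + 1 := by omega
          rw [h.2, this]
      chain_stable := by
        intro k hk
        show (if k ≤ n then S.chain k else μ) = (if n + 1 ≤ n then S.chain (n + 1) else μ)
        rw [if_neg (by omega : ¬ k ≤ n), if_neg (by omega : ¬ n + 1 ≤ n)] }
  else rowSYT (n + 1)

end SYT

/-- Complementation of a binary sequence (`ol` in the paper, swapping `0` and `1`). -/
def olB (b : ℕ → Bool) : ℕ → Bool := fun i => !b i

/-- Truncation `b ↦ b_† = b₂b₃⋯` of a binary sequence. -/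
def shiftB (b : ℕ → Bool) : ℕ → Bool := fun i => b (i + 1)

/-- The generalised bijection `φ_{λ,b}` of Definition 4.1(1), defined (for an
arbitrary shape-preserving family of evacuation involutions `ev`) by
`φ_{λ,b}(T) = (φ_{μ,b_†}(d T))⁺` if `b₁ = 0` and
`φ_{λ,b}(T) = (φ_{μ,ol(b_†)}(d (ev T)))⁺` if `b₁ = 1`. -/
noncomputable def phiB (ev : ∀ m, SYT m → SYT m) : ∀ n : ℕ, (ℕ → Bool) → SYT n → SYT n
  | 0, _, T => T
  | n + 1, b, T =>
    if b 0 then (phiB ev n (olB (shiftB b)) ((ev (n + 1) T).d)).up T.shape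
    else (phiB ev n (shiftB b) T.d).up T.shape

/-- The generalised partial order `≤_{λ,b}` of Definition 4.1(2), defined
recursively (relative to a family of evacuation involutions `ev`). -/
noncomputable def leB (ev : ∀ m, SYT m → SYT m) : ∀ n : ℕ, (ℕ → Bool) → SYT n → SYT n → Prop
  | 0, _, _, _ => True
  | n + 1, b, S, T =>
    if b 0 then
      (ev (n + 1) S).row (n + 1) < (ev (n + 1) T).row (n + 1) ∨
        ((ev (n + 1) S).row (n + 1) = (ev (n + 1) T).row (n + 1) ∧
          leB ev n (olB (shiftB b)) ((ev (n + 1) S).d) ((ev (n + 1) T).d))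
    else
      S.row (n + 1) < T.row (n + 1) ∨
        (S.row (n + 1) = T.row (n + 1) ∧ leB ev n (shiftB b) S.d T.d)

/-- The strict order `<_{λ,b}`. -/
noncomputable def ltB (ev : ∀ m, SYT m → SYT m) (n : ℕ) (b : ℕ → Bool) (S T : SYT n) : Prop :=
  leB ev n b S T ∧ S ≠ T

/-- The standard parabolic subgroup `S_{[a,b]}` of `S_n` consisting of the
permutations fixing every point outside the (1-indexed) interval `[a,b]`. -/
def intervalSubgroup (n a b : ℕ) : Subgroup (Equiv.Perm (Fin n)) where
  carrier := {σ | ∀ i : Fin n, (i.val + 1 < a ∨ b < i.val + 1) → σ i = i}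
  one_mem' := fun _ _ => rfl
  mul_mem' := by
    intro σ τ hσ hτ i hi
    have : (σ * τ) i = σ (τ i) := rfl
    rw [this, hτ i hi, hσ i hi]
  inv_mem' := by
    intro σ hσ i hi
    conv_lhs => rw [← hσ i hi]
    exact σ.symm_apply_apply i

/-- The lower endpoints of the intervals in the multiplicity-free chain
labelled by a binary sequence `b` (0-indexed: `chainLo b (m-1)` is the lower
endpoint of the interval `I_m`); `b m = true` means the smallest element is
removed at the `m`-th step. -/
def chainLo (b : ℕ → Bool) : ℕ → ℕ
  | 0 => 1
  | m + 1 => chainLo b m + (if b m then 1 else 0)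

/-- The upper endpoints of the intervals in the multiplicity-free chain
labelled by a binary sequence `b`; `b m = false` means the largest element is
removed at the `m`-th step. -/
def chainHi (n : ℕ) (b : ℕ → Bool) : ℕ → ℕ
  | 0 => n
  | m + 1 => chainHi n b m - (if b m then 0 else 1)
/-!
Multiplicity-free chains of parabolic subgroups, their binary-sequence labels,
and longest elements of interval symmetric groups.
-/

/-- The underlying function of the longest element `w_I` of the symmetric group
on the (1-indexed) interval `I = [a,b] ⊆ [1,n]`: it sends `j ∈ I` to
`a + b - j` and fixes the complement pointwise. -/
def wIntervalFun (n a b : ℕ) (i : Fin n) : Fin n :=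
  if h : 1 ≤ a ∧ a ≤ i.val + 1 ∧ i.val + 1 ≤ b ∧ b ≤ n then
    ⟨a + b - (i.val + 2), by omega⟩
  else i

lemma wIntervalFun_val (n a b : ℕ) (j : Fin n) :
    (wIntervalFun n a b j).val =
      if 1 ≤ a ∧ a ≤ j.val + 1 ∧ j.val + 1 ≤ b ∧ b ≤ n then a + b - (j.val + 2)
      else j.val := by
  unfold wIntervalFun
  split_ifs with h
  · rfl
  · rfl

lemma wIntervalFun_involutive (n a b : ℕ) : Function.Involutive (wIntervalFun n a b) := by
  intro i
  apply Fin.ext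
  rw [wIntervalFun_val, wIntervalFun_val]
  split_ifs <;> omega

/-- The longest element `w_I ∈ S_I ≤ S_n` of the symmetric group on the
(1-indexed) interval `I = [a,b] ⊆ [1,n]`. -/
def wInterval (n a b : ℕ) : Equiv.Perm (Fin n) :=
  Function.Involutive.toPerm _ (wIntervalFun_involutive n a b)

/-- `G` (with 1-indexed meaningful entries `G 1, …, G (n-1)`, normalised to `⊤`
outside that range) is a multiplicity-free chain of `S_n`: a descending chain
`S_n = G 1 ⊃ G 2 ⊃ ⋯ ⊃ G (n-1)` of standard parabolic subgroups with `G m` the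
symmetric group on an interval of size `n - m + 1`. -/
def IsMFChain (n : ℕ) (G : ℕ → Subgroup (Equiv.Perm (Fin n))) : Prop :=
  (∀ m, 1 ≤ m → m ≤ n - 1 → ∃ a b : ℕ,
      1 ≤ a ∧ a ≤ b ∧ b ≤ n ∧ b + m = a + n ∧ G m = intervalSubgroup n a b) ∧
  (∀ m, 1 ≤ m → m ≤ n - 2 → G (m + 1) ≤ G m) ∧
  (∀ m, m = 0 ∨ n - 1 < m → G m = ⊤)

/-- The chain `G` is labelled by the binary sequence `b`, i.e. `G m` is the
symmetric group on the interval `I_m` determined by the recursion: `I_1 = [1,n]`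
and `I_{m+1}` is obtained from `I_m` by removing the largest element if
`b_m = 0` and the smallest element if `b_m = 1`. -/
def ChainLabelled (n : ℕ) (G : ℕ → Subgroup (Equiv.Perm (Fin n))) (b : ℕ → Bool) : Prop :=
  ∀ m, 1 ≤ m → m ≤ n - 1 →
    G m = intervalSubgroup n (chainLo b (m - 1)) (chainHi n b (m - 1))

/-- Extend a binary sequence of length `n - 2` by zeros to a function `ℕ → Bool`. -/
def extendBool (n : ℕ) (bs : Fin (n - 2) → Bool) : ℕ → Bool :=
  fun i => if h : i < n - 2 then bs ⟨i, h⟩ else false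

/-- `u` is a product of longest elements of interval symmetric groups. -/
def IsIntervalLongestProduct (n : ℕ) (u : Equiv.Perm (Fin n)) : Prop :=
  ∃ L : List (ℕ × ℕ), (∀ p ∈ L, 1 ≤ p.1 ∧ p.1 ≤ p.2 ∧ p.2 ≤ n) ∧
    u = (L.map fun p => wInterval n p.1 p.2).prod

/-- Conjugation by `u` carries the standard chain `(S_n, S_{n-1}, …, S_2)` to
the chain `G`, i.e. `u ⬝ S_{[1, n-m+1]} ⬝ u⁻¹ = G m` for all `1 ≤ m ≤ n - 1`. -/
def ConjugatesStdChain (n : ℕ) (u : Equiv.Perm (Fin n))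
    (G : ℕ → Subgroup (Equiv.Perm (Fin n))) : Prop :=
  ∀ m, 1 ≤ m → m ≤ n - 1 →
    Subgroup.map (MulAut.conj u).toMonoidHom (intervalSubgroup n 1 (n - m + 1)) = G m

/-!
Conjugation by `w₀` is relabelling by the reflection `i ↦ n + 1 - i`, which carries
`S_{[a,b]}` to `S_{[n+1-b, n+1-a]}`. Under the reflection, removing the largest element of an
interval becomes removing the smallest, so the reflected intervals are those labelled by
`ol(b)`; and conjugating by `w₀` after `u` is conjugating by `w₀u`.
-/

theorem Subgroup.map_conj_mul {G : Type*} [Group G] (g h : G) (H : Subgroup G) :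
    H.map (MulAut.conj (g * h)).toMonoidHom =
      (H.map (MulAut.conj h).toMonoidHom).map (MulAut.conj g).toMonoidHom := by
  rw [Subgroup.map_map, map_mul]
  rfl

theorem map_conj_revPerm_intervalSubgroup (n a b : ℕ) :
    (intervalSubgroup n a b).map (MulAut.conj (Fin.revPerm : Equiv.Perm (Fin n))).toMonoidHom =
      intervalSubgroup n (n + 1 - b) (n + 1 - a) := by
  ext τ
  rw [Subgroup.mem_map_equiv]
  have hconj : ∀ i, ((MulAut.conj (Fin.revPerm : Equiv.Perm (Fin n))).symm τ) i =
      (τ i.rev).rev := fun _ => rfl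
  constructor
  · intro h i hi
    have hi' := h i.rev (by rw [Fin.val_rev]; omega)
    rw [hconj, Fin.rev_rev] at hi'
    simpa using congrArg Fin.rev hi'
  · intro h i hi
    rw [hconj, h i.rev (by rw [Fin.val_rev]; omega), Fin.rev_rev]

theorem sub_le_chainHi (n : ℕ) (b : ℕ → Bool) (m : ℕ) : n - m ≤ chainHi n b m := by
  induction m with
  | zero => exact Nat.sub_le n 0
  | succ m ih => simp only [chainHi]; split <;> omega

theorem chainLo_add_chainHi_olB (n : ℕ) (b : ℕ → Bool) {m : ℕ} (hm : m ≤ n) :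
    chainLo b m + chainHi n (olB b) m = n + 1 := by
  induction m with
  | zero => simp only [chainLo, chainHi]; omega
  | succ m ih =>
    have hhi := sub_le_chainHi n (olB b) m
    have hlo := ih (by omega)
    simp only [chainLo, chainHi, olB]
    by_cases hb : b m <;> simp only [hb, Bool.not_true, Bool.not_false, if_true, if_false,
      Bool.false_eq_true] <;> omega

theorem olB_olB (b : ℕ → Bool) : olB (olB b) = b :=
  funext fun i => Bool.not_not (b i)

section ConjChain

variable {n : ℕ} {G : ℕ → Subgroup (Equiv.Perm (Fin n))}

theorem IsMFChain.map_conj_revPerm (hG : IsMFChain n G) :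
    IsMFChain n fun m =>
      (G m).map (MulAut.conj (Fin.revPerm : Equiv.Perm (Fin n))).toMonoidHom := by
  obtain ⟨hinterval, hanti, htop⟩ := hG
  refine ⟨fun m h1 h2 => ?_, fun m h1 h2 => Subgroup.map_mono (hanti m h1 h2), fun m hm => ?_⟩
  · obtain ⟨a, c, ha, hac, hc, hsize, hGm⟩ := hinterval m h1 h2
    refine ⟨n + 1 - c, n + 1 - a, by omega, by omega, by omega, by omega, ?_⟩
    dsimp only
    rw [hGm, map_conj_revPerm_intervalSubgroup]
  · dsimp only
    rw [htop m hm]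
    exact Subgroup.map_top_of_surjective _ (MulAut.conj _).surjective

theorem ChainLabelled.map_conj_revPerm {b : ℕ → Bool} (hlab : ChainLabelled n G b) :
    ChainLabelled n (fun m =>
      (G m).map (MulAut.conj (Fin.revPerm : Equiv.Perm (Fin n))).toMonoidHom) (olB b) := by
  intro m h1 h2
  have hlo := chainLo_add_chainHi_olB n b (m := m - 1) (by omega)
  have hhi := chainLo_add_chainHi_olB n (olB b) (m := m - 1) (by omega)
  rw [olB_olB] at hhi
  simp only [hlab m h1 h2, map_conj_revPerm_intervalSubgroup]
  congr 1 <;> omega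

theorem ConjugatesStdChain.mul_left {u : Equiv.Perm (Fin n)} (hu : ConjugatesStdChain n u G)
    (σ : Equiv.Perm (Fin n)) :
    ConjugatesStdChain n (σ * u) fun m => (G m).map (MulAut.conj σ).toMonoidHom := by
  intro m h1 h2
  rw [Subgroup.map_conj_mul, hu m h1 h2]

end ConjChain

theorem conjugated_chain_by_longest_element_general (n : ℕ)
    (G : ℕ → Subgroup (Equiv.Perm (Fin n))) (b : ℕ → Bool)
    (hG : IsMFChain n G) (hlab : ChainLabelled n G b)
    (u : Equiv.Perm (Fin n)) (hu : ConjugatesStdChain n u G) :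
    IsMFChain n (fun m =>
      Subgroup.map (MulAut.conj (Fin.revPerm : Equiv.Perm (Fin n))).toMonoidHom (G m)) ∧
    ChainLabelled n (fun m =>
      Subgroup.map (MulAut.conj (Fin.revPerm : Equiv.Perm (Fin n))).toMonoidHom (G m))
      (olB b) ∧
    ConjugatesStdChain n (Fin.revPerm * u) (fun m =>
      Subgroup.map (MulAut.conj (Fin.revPerm : Equiv.Perm (Fin n))).toMonoidHom (G m)) :=
  ⟨hG.map_conj_revPerm, hlab.map_conj_revPerm, hu.mul_left Fin.revPerm⟩

theorem conjugated_chain_by_longest_element (n : ℕ) (hn : 2 ≤ n)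
    (G : ℕ → Subgroup (Equiv.Perm (Fin n))) (b : ℕ → Bool)
    (hG : IsMFChain n G) (hlab : ChainLabelled n G b)
    (u : Equiv.Perm (Fin n)) (hu : ConjugatesStdChain n u G) :
    IsMFChain n (fun m =>
      Subgroup.map (MulAut.conj (Fin.revPerm : Equiv.Perm (Fin n))).toMonoidHom (G m)) ∧
    ChainLabelled n (fun m =>
      Subgroup.map (MulAut.conj (Fin.revPerm : Equiv.Perm (Fin n))).toMonoidHom (G m))
      (olB b) ∧
    ConjugatesStdChain n (Fin.revPerm * u) (fun m =>
      Subgroup.map (MulAut.conj (Fin.revPerm : Equiv.Perm (Fin n))).toMonoidHom (G m)) :=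
  conjugated_chain_by_longest_element_general n G b hG hlab u hu
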